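/- Let E ∪_m F be an adjunction topological graph such that G is a regular closed subgraph of F and m : G → E is a regular factor map. If G⁰_sink ∩ (closure(F⁰_sink) \ F⁰_sink) ∩ F⁰_fin = ∅, then E is a regular closed subgraph of E ∪_m F and the canonical pair p : F → E ∪_m F is a regular factor map. -/

import Mathlib

open Set Topology

/-- A continuous map which is proper: preimages of compact sets are compact. -/
def ProperCont {X Y : Type*} [TopologicalSpace X] [TopologicalSpace Y] (f : X → Y) : Prop :=
  Continuous f ∧ ∀ K : Set Y, IsCompact K → IsCompact (f ⁻¹' K)

/-- The raw data of a (topological) graph: a source and a range map from edges to vertices. -/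
structure GraphData (V E : Type*) where
  s : E → V
  r : E → V

/-- `g` is a topological graph: source and range are continuous and the range map is a
local homeomorphism. -/
structure IsTopGraph {V E : Type*} [TopologicalSpace V] [TopologicalSpace E]
    (g : GraphData V E) : Prop where
  s_cont : Continuous g.s
  r_cont : Continuous g.r
  r_locHomeo : IsLocalHomeomorph g.r

namespace GraphData

variable {V E : Type*} [TopologicalSpace V] [TopologicalSpace E]

/-- `E⁰_fin`: vertices having a neighborhood whose preimage under the source map is compact. -/
def finSet (g : GraphData V E) : Set V := {v | ∃ U ∈ nhds v, IsCompact (g.s ⁻¹' U)}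

/-- `E⁰_sink = E⁰ \ closure (s(E¹))`. -/
def sinkSet (g : GraphData V E) : Set V := (closure (Set.range g.s))ᶜ

/-- `E⁰_reg = E⁰_fin \ closure (E⁰_sink)`. -/
def regSet (g : GraphData V E) : Set V := g.finSet \ closure g.sinkSet

/-- `E⁰_sing = E⁰ \ E⁰_reg`. -/
def singSet (g : GraphData V E) : Set V := (g.regSet)ᶜ

/-- A set of vertices is negatively invariant if every regular vertex in it emits an
edge whose range lies in it. -/
def NegInvariant (g : GraphData V E) (Y : Set V) : Prop :=
  ∀ v ∈ Y ∩ g.regSet, ∃ e, g.s e = v ∧ g.r e ∈ Y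

/-- A topological graph is row-finite if `s(E¹) = E⁰_reg`. -/
def RowFinite (g : GraphData V E) : Prop := Set.range g.s = g.regSet

/-- The restriction of a graph to a pair of subsets of vertices and edges. -/
def restrict (g : GraphData V E) (G0 : Set V) (G1 : Set E)
    (hs : Set.MapsTo g.s G1 G0) (hr : Set.MapsTo g.r G1 G0) : GraphData G0 G1 where
  s := fun e => ⟨g.s e, hs e.2⟩
  r := fun e => ⟨g.r e, hr e.2⟩

end GraphData

/-- `(G0, G1)` determines a closed subgraph of `g` (in particular it is itself
a topological graph with the restricted source and range maps). -/
structure IsClosedSubgraph {V E : Type*} [TopologicalSpace V] [TopologicalSpace E]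
    (g : GraphData V E) (G0 : Set V) (G1 : Set E) : Prop where
  s_maps : Set.MapsTo g.s G1 G0
  r_maps : Set.MapsTo g.r G1 G0
  closed0 : IsClosed G0
  closed1 : IsClosed G1
  isGraph : IsTopGraph (g.restrict G0 G1 s_maps r_maps)

/-- A regular closed subgraph: a closed subgraph whose vertex set is negatively invariant
and such that `r⁻¹(G⁰) ⊆ G¹`. -/
structure IsRegularClosedSubgraph {V E : Type*} [TopologicalSpace V] [TopologicalSpace E]
    (g : GraphData V E) (G0 : Set V) (G1 : Set E) extends IsClosedSubgraph g G0 G1 : Prop where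
  negInv : g.NegInvariant G0
  r_pre : g.r ⁻¹' G0 ⊆ G1

/-- A regular factor map `(m¹, m⁰) : gG → gF` between topological graphs: a pair of proper
continuous maps satisfying (F1), (F2) and (F3). -/
structure IsRegularFactorMap {V1 E1 V2 E2 : Type*}
    [TopologicalSpace V1] [TopologicalSpace E1] [TopologicalSpace V2] [TopologicalSpace E2]
    (gG : GraphData V1 E1) (gF : GraphData V2 E2) (m0 : V1 → V2) (m1 : E1 → E2) : Prop where
  proper0 : ProperCont m0
  proper1 : ProperCont m1
  F1r : ∀ e, gF.r (m1 e) = m0 (gG.r e)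
  F1s : ∀ e, gF.s (m1 e) = m0 (gG.s e)
  F2 : ∀ (x : E2) (v : V1), gF.r x = m0 v → ∃! e : E1, m1 e = x ∧ gG.r e = v
  F3 : m0 '' gG.singSet ⊆ gF.singSet

section Adjunction

/-- The relation generating the adjunction-space identification: `a ∈ A ⊆ Y` is glued
to `f a ∈ X`. -/
inductive AdjRel {X Y : Type*} {A : Set Y} (f : A → X) : X ⊕ Y → X ⊕ Y → Prop
  | glue (a : A) : AdjRel f (Sum.inl (f a)) (Sum.inr a.1)

/-- The adjunction space `X ∪_f Y`. -/
def AdjSpace {X Y : Type*} {A : Set Y} (f : A → X) : Type _ := Quot (AdjRel f)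

instance {X Y : Type*} [TopologicalSpace X] [TopologicalSpace Y] {A : Set Y} (f : A → X) :
    TopologicalSpace (AdjSpace f) :=
  inferInstanceAs (TopologicalSpace (Quot (AdjRel f)))

/-- The canonical (closed) embedding `X → X ∪_f Y`. -/
def adjInc {X Y : Type*} {A : Set Y} (f : A → X) : X → AdjSpace f :=
  fun x => Quot.mk _ (Sum.inl x)

/-- The canonical map `p : Y → X ∪_f Y`. -/
def adjP {X Y : Type*} {A : Set Y} (f : A → X) : Y → AdjSpace f :=
  fun y => Quot.mk _ (Sum.inr y)

variable {VE EE VF EF : Type*}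

/-- The source map `s_∪` of the adjunction graph `E ∪_m F`. -/
def adjS (gE : GraphData VE EE) (gF : GraphData VF EF) {G0 : Set VF} {G1 : Set EF}
    (m0 : G0 → VE) (m1 : G1 → EE) (hs : Set.MapsTo gF.s G1 G0)
    (hF1s : ∀ e : G1, gE.s (m1 e) = m0 ⟨gF.s e, hs e.2⟩) :
    AdjSpace m1 → AdjSpace m0 :=
  Quot.lift
    (fun x => match x with
      | Sum.inl e => adjInc m0 (gE.s e)
      | Sum.inr e => adjP m0 (gF.s e))
    (by
      rintro _ _ ⟨a⟩
      show adjInc m0 (gE.s (m1 a)) = adjP m0 (gF.s a.1)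
      rw [hF1s a]
      exact Quot.sound (AdjRel.glue ⟨gF.s a.1, hs a.2⟩))

/-- The range map `r_∪` of the adjunction graph `E ∪_m F`. -/
def adjR (gE : GraphData VE EE) (gF : GraphData VF EF) {G0 : Set VF} {G1 : Set EF}
    (m0 : G0 → VE) (m1 : G1 → EE) (hr : Set.MapsTo gF.r G1 G0)
    (hF1r : ∀ e : G1, gE.r (m1 e) = m0 ⟨gF.r e, hr e.2⟩) :
    AdjSpace m1 → AdjSpace m0 :=
  Quot.lift
    (fun x => match x with
      | Sum.inl e => adjInc m0 (gE.r e)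
      | Sum.inr e => adjP m0 (gF.r e))
    (by
      rintro _ _ ⟨a⟩
      show adjInc m0 (gE.r (m1 a)) = adjP m0 (gF.r a.1)
      rw [hF1r a]
      exact Quot.sound (AdjRel.glue ⟨gF.r a.1, hr a.2⟩))

/-- The adjunction graph `E ∪_m F`, obtained by attaching the topological graph `F` to the
topological graph `E` along a closed subgraph `(G0, G1)` of `F` via the pair `(m¹, m⁰)`. -/
def adjGraph (gE : GraphData VE EE) (gF : GraphData VF EF) {G0 : Set VF} {G1 : Set EF}
    (m0 : G0 → VE) (m1 : G1 → EE)
    (hs : Set.MapsTo gF.s G1 G0) (hr : Set.MapsTo gF.r G1 G0)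
    (hF1s : ∀ e : G1, gE.s (m1 e) = m0 ⟨gF.s e, hs e.2⟩)
    (hF1r : ∀ e : G1, gE.r (m1 e) = m0 ⟨gF.r e, hr e.2⟩) :
    GraphData (AdjSpace m0) (AdjSpace m1) where
  s := adjS gE gF m0 m1 hs hF1s
  r := adjR gE gF m0 m1 hr hF1r

end Adjunction

/-!
Since `G⁰`, `G¹` are closed and `m` is proper, the quotient maps defining `E ∪_m F` are proper;
so `E` embeds as a closed subgraph and `p` is proper. The rest amounts to showing that singular
vertices of `E` and of `F` stay singular in `E ∪_m F`, and since a finite singular vertex is a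
limit of sinks, only sinks need attention. This is where the boundary condition enters: a sink
of `E` could only emit edges in `E ∪_m F` through a sink of `G` that is a regular vertex of `F`,
and negative invariance of `G⁰` forbids this.
-/

namespace GraphData

variable {V E V' E' : Type*} [TopologicalSpace V] [TopologicalSpace V']
  {g : GraphData V E} {g' : GraphData V' E'} {φ0 : V → V'} {φ1 : E → E'}

theorem mem_sinkSet_of_map (hφ0 : Continuous φ0) (hs : ∀ e, g'.s (φ1 e) = φ0 (g.s e)) {v : V}
    (hv : φ0 v ∈ g'.sinkSet) : v ∈ g.sinkSet := fun hcl => by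
  have hrange : φ0 '' range g.s ⊆ range g'.s := by
    rintro _ ⟨_, ⟨e, rfl⟩, rfl⟩
    exact ⟨φ1 e, hs e⟩
  exact hv (closure_mono hrange (image_closure_subset_closure_image hφ0 (mem_image_of_mem φ0 hcl)))

variable [TopologicalSpace E] [TopologicalSpace E']

theorem isOpen_finSet : IsOpen g.finSet := by
  refine isOpen_iff_mem_nhds.2 fun v ⟨U, hU, hK⟩ => ?_
  filter_upwards [eventually_mem_nhds_iff.2 hU] with u hu using ⟨U, hu, hK⟩

theorem isClosed_singSet : IsClosed g.singSet :=
  (isOpen_finSet.sdiff isClosed_closure).isClosed_compl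

theorem sinkSet_subset_singSet : g.sinkSet ⊆ g.singSet :=
  fun _ hv hreg => hreg.2 (subset_closure hv)

theorem mem_finSet_of_map (hφ0 : Continuous φ0) (hφ1 : ∀ K, IsCompact K → IsCompact (φ1 ⁻¹' K))
    (hs : ∀ e, g'.s (φ1 e) = φ0 (g.s e)) {v : V} (hv : φ0 v ∈ g'.finSet) : v ∈ g.finSet := by
  obtain ⟨U, hU, hK⟩ := hv
  refine ⟨φ0 ⁻¹' U, hφ0.continuousAt.preimage_mem_nhds hU, ?_⟩
  have hpre : g.s ⁻¹' (φ0 ⁻¹' U) = φ1 ⁻¹' (g'.s ⁻¹' U) := by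
    ext e
    simp only [mem_preimage, hs]
  exact hpre ▸ hφ1 _ hK

theorem image_singSet_subset (hφ0 : Continuous φ0) (hfin : ∀ v, φ0 v ∈ g'.finSet → v ∈ g.finSet)
    (hsink : φ0 '' g.sinkSet ⊆ g'.singSet) : φ0 '' g.singSet ⊆ g'.singSet := by
  rintro _ ⟨v, hv, rfl⟩ hreg
  have hv_cl : v ∈ closure g.sinkSet := by_contra fun h => hv ⟨hfin v hreg.1, h⟩
  exact (image_closure_subset_closure_image hφ0).trans (closure_minimal hsink isClosed_singSet)
    (mem_image_of_mem φ0 hv_cl) hreg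

theorem regSet_subset_range_s
    (hclosed : ∀ K, IsCompact K → IsClosed (g.s '' K)) : g.regSet ⊆ range g.s := by
  rintro v ⟨⟨U, hU, hK⟩, hv⟩
  have hv_cl : v ∈ closure (range g.s) := by_contra fun h => hv (subset_closure h)
  have hv_clU : v ∈ closure (g.s '' (g.s ⁻¹' U)) := by
    rw [image_preimage_eq_inter_range]
    exact closure_mono (inter_subset_inter_left _ interior_subset)
      (isOpen_interior.inter_closure ⟨mem_interior_iff_mem_nhds.2 hU, hv_cl⟩)
  rw [(hclosed _ hK).closure_eq] at hv_clU
  exact image_subset_range _ _ hv_clU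

end GraphData

theorem ProperCont.isProperMap {X Y : Type*} [TopologicalSpace X] [TopologicalSpace Y]
    [T2Space Y] [LocallyCompactSpace Y] {f : X → Y} (hf : ProperCont f) : IsProperMap f :=
  isProperMap_iff_isCompact_preimage.2 ⟨hf.1, fun K hK => hf.2 K hK⟩

theorem IsProperMap.properCont {X Y : Type*} [TopologicalSpace X] [TopologicalSpace Y]
    {f : X → Y} (hf : IsProperMap f) : ProperCont f :=
  ⟨hf.continuous, fun _ hK => hf.isCompact_preimage hK⟩

theorem IsTopGraph.restrict_range {V E V' E' : Type*} [TopologicalSpace V] [TopologicalSpace E]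
    [TopologicalSpace V'] [TopologicalSpace E'] {g : GraphData V E} {g' : GraphData V' E'}
    (hg : IsTopGraph g) {i0 : V → V'} {i1 : E → E'} (h0 : IsEmbedding i0) (h1 : IsEmbedding i1)
    (hs : ∀ e, g'.s (i1 e) = i0 (g.s e)) (hr : ∀ e, g'.r (i1 e) = i0 (g.r e))
    (hsm : MapsTo g'.s (range i1) (range i0)) (hrm : MapsTo g'.r (range i1) (range i0)) :
    IsTopGraph (g'.restrict _ _ hsm hrm) := by
  set φ0 := h0.toHomeomorph
  set φ1 := h1.toHomeomorph
  have hs' : (g'.restrict _ _ hsm hrm).s = φ0 ∘ g.s ∘ φ1.symm := by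
    funext ξ
    obtain ⟨e, rfl⟩ := φ1.surjective ξ
    simp only [Function.comp_apply, Homeomorph.symm_apply_apply]
    exact Subtype.ext (hs e)
  have hr' : (g'.restrict _ _ hsm hrm).r = φ0 ∘ g.r ∘ φ1.symm := by
    funext ξ
    obtain ⟨e, rfl⟩ := φ1.surjective ξ
    simp only [Function.comp_apply, Homeomorph.symm_apply_apply]
    exact Subtype.ext (hr e)
  refine ⟨?_, ?_, ?_⟩
  · rw [hs']
    exact φ0.continuous.comp (hg.s_cont.comp φ1.symm.continuous)
  · rw [hr']
    exact φ0.continuous.comp (hg.r_cont.comp φ1.symm.continuous)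
  · rw [hr']
    exact φ0.isLocalHomeomorph.comp (hg.r_locHomeo.comp φ1.symm.isLocalHomeomorph)

section AdjSpace

variable {X Y : Type*} {A : Set Y} (f : A → X)

open Classical in
/-- Glued points are sent to their representative in `X`; this separates the classes. -/
private noncomputable def adjNormalForm : X ⊕ Y → X ⊕ Y
  | .inl x => .inl x
  | .inr y => if h : y ∈ A then .inl (f ⟨y, h⟩) else .inr y

private noncomputable def adjNormalFormQuot : AdjSpace f → X ⊕ Y :=
  Quot.lift (adjNormalForm f) (by
    rintro _ _ ⟨a⟩
    simp [adjNormalForm, a.2])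

private theorem adjNormalFormQuot_adjInc (x : X) :
    adjNormalFormQuot f (adjInc f x) = .inl x := rfl

private theorem adjNormalFormQuot_adjP {y : Y} (hy : y ∉ A) :
    adjNormalFormQuot f (adjP f y) = .inr y := by
  simp [adjNormalFormQuot, adjP, adjNormalForm, hy]

def adjQuot : X ⊕ Y → AdjSpace f := Quot.mk _

theorem adjQuot_surjective : Function.Surjective (adjQuot f) := Quot.mk_surjective

theorem adjP_eq_adjInc {y : Y} (hy : y ∈ A) : adjP f y = adjInc f (f ⟨y, hy⟩) :=
  (Quot.sound (AdjRel.glue ⟨y, hy⟩)).symm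

theorem adjInc_injective : Function.Injective (adjInc f) := fun x x' h => by
  simpa [adjNormalFormQuot_adjInc] using congrArg (adjNormalFormQuot f) h

theorem adjInc_eq_adjP_iff {x : X} {y : Y} :
    adjInc f x = adjP f y ↔ ∃ hy : y ∈ A, f ⟨y, hy⟩ = x := by
  refine ⟨fun h => ?_, fun ⟨hy, hx⟩ => hx ▸ (adjP_eq_adjInc f hy).symm⟩
  by_cases hy : y ∈ A
  · exact ⟨hy, adjInc_injective f (h.trans (adjP_eq_adjInc f hy)).symm⟩
  · simpa [adjNormalFormQuot_adjInc, adjNormalFormQuot_adjP f hy] using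
      congrArg (adjNormalFormQuot f) h

theorem adjP_eq_adjP_iff_of_notMem {y y' : Y} (hy : y ∉ A) : adjP f y' = adjP f y ↔ y' = y := by
  refine ⟨fun h => ?_, fun h => h ▸ rfl⟩
  by_cases hy' : y' ∈ A
  · exact absurd ((adjInc_eq_adjP_iff f).1 ((adjP_eq_adjInc f hy').symm.trans h)).1 hy
  · simpa [adjNormalFormQuot_adjP f hy, adjNormalFormQuot_adjP f hy'] using
      congrArg (adjNormalFormQuot f) h

theorem exists_eq_adjInc_or_adjP (z : AdjSpace f) :
    (∃ x, z = adjInc f x) ∨ ∃ y ∉ A, z = adjP f y := by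
  obtain ⟨x | y, rfl⟩ := adjQuot_surjective f z
  · exact .inl ⟨x, rfl⟩
  by_cases hy : y ∈ A
  · exact .inl ⟨f ⟨y, hy⟩, adjP_eq_adjInc f hy⟩
  · exact .inr ⟨y, hy, rfl⟩

theorem adjInc_preimage_image_quot (C : Set (X ⊕ Y)) :
    adjInc f ⁻¹' (adjQuot f '' C) = Sum.inl ⁻¹' C ∪ f '' {a | .inr a.1 ∈ C} := by
  ext x
  constructor
  · rintro ⟨x' | y, hc, hq⟩
    · exact .inl (adjInc_injective f hq ▸ hc)
    · obtain ⟨hy, rfl⟩ := (adjInc_eq_adjP_iff f).1 hq.symm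
      exact .inr ⟨⟨y, hy⟩, hc, rfl⟩
  · rintro (hx | ⟨a, ha, rfl⟩)
    · exact ⟨.inl x, hx, rfl⟩
    · exact ⟨.inr a.1, ha, adjP_eq_adjInc f a.2⟩

theorem adjP_preimage_image_quot (C : Set (X ⊕ Y)) :
    adjP f ⁻¹' (adjQuot f '' C) =
      Sum.inr ⁻¹' C ∪ Subtype.val '' (f ⁻¹' (adjInc f ⁻¹' (adjQuot f '' C))) := by
  ext y
  constructor
  · intro hy
    by_cases hyA : y ∈ A
    · refine .inr ⟨⟨y, hyA⟩, ?_, rfl⟩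
      rwa [mem_preimage, mem_preimage, ← adjP_eq_adjInc f hyA]
    · obtain ⟨x | y', hc, hq⟩ := hy
      · exact absurd ((adjInc_eq_adjP_iff f).1 hq).1 hyA
      · exact .inl ((adjP_eq_adjP_iff_of_notMem f hyA).1 hq ▸ hc)
  · rintro (hy | ⟨a, ha, rfl⟩)
    · exact ⟨.inr y, hy, rfl⟩
    · rwa [mem_preimage, adjP_eq_adjInc f a.2]

variable [TopologicalSpace X] [TopologicalSpace Y]

theorem continuous_adjInc : Continuous (adjInc f) :=
  continuous_quot_mk.comp continuous_inl

theorem continuous_adjP : Continuous (adjP f) :=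
  continuous_quot_mk.comp continuous_inr

theorem isClosed_adjSpace_iff {C : Set (AdjSpace f)} :
    IsClosed C ↔ IsClosed (adjInc f ⁻¹' C) ∧ IsClosed (adjP f ⁻¹' C) :=
  ((isQuotientMap_quot_mk (r := AdjRel f)).isClosed_preimage (s := C)).symm.trans isClosed_sum_iff

variable {f}

theorem isClosedMap_adjQuot (hA : IsClosed A) (hf : IsProperMap f) :
    IsClosedMap (adjQuot f) := by
  intro C hC
  have hinc : IsClosed (adjInc f ⁻¹' (adjQuot f '' C)) := by
    rw [adjInc_preimage_image_quot]
    exact (hC.preimage continuous_inl).union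
      (hf.isClosedMap _ ((hC.preimage continuous_inr).preimage continuous_subtype_val))
  refine (isClosed_adjSpace_iff f).2 ⟨hinc, ?_⟩
  rw [adjP_preimage_image_quot]
  exact (hC.preimage continuous_inr).union
    (hA.isClosedEmbedding_subtypeVal.isClosedMap _ (hinc.preimage hf.continuous))

theorem isProperMap_adjQuot (hA : IsClosed A) (hf : IsProperMap f) :
    IsProperMap (adjQuot f) := by
  refine isProperMap_iff_isClosedMap_and_compact_fibers.2
    ⟨continuous_quot_mk, isClosedMap_adjQuot hA hf, fun z => ?_⟩
  rcases exists_eq_adjInc_or_adjP f z with ⟨x, rfl⟩ | ⟨y, hy, rfl⟩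
  · have hfiber : adjQuot f ⁻¹' {adjInc f x} =
        {.inl x} ∪ (Sum.inr ∘ Subtype.val) '' (f ⁻¹' {x}) := by
      ext (x' | y)
      · change adjInc f x' = adjInc f x ↔ _
        simp [(adjInc_injective f).eq_iff]
      · change adjP f y = adjInc f x ↔ _
        rw [eq_comm, adjInc_eq_adjP_iff]
        simp
    exact hfiber ▸ isCompact_singleton.union ((hf.isCompact_preimage isCompact_singleton).image
      (continuous_inr.comp continuous_subtype_val))
  · have hfiber : adjQuot f ⁻¹' {adjP f y} = {.inr y} := by
      ext (x' | y')
      · change adjInc f x' = adjP f y ↔ _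
        simpa using fun hx => hy ((adjInc_eq_adjP_iff f).1 hx).1
      · change adjP f y' = adjP f y ↔ _
        simpa using adjP_eq_adjP_iff_of_notMem f hy
    exact hfiber ▸ isCompact_singleton

theorem isProperMap_adjP (hA : IsClosed A) (hf : IsProperMap f) : IsProperMap (adjP f) :=
  (isProperMap_adjQuot hA hf).comp IsClosedEmbedding.inr.isProperMap

theorem isClosedEmbedding_adjInc (hA : IsClosed A) (hf : IsProperMap f) :
    IsClosedEmbedding (adjInc f) :=
  .of_continuous_injective_isClosedMap (continuous_adjInc f) (adjInc_injective f)
    ((isClosedMap_adjQuot hA hf).comp IsClosedEmbedding.inl.isClosedMap)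

end AdjSpace

section AdjGraph

variable {VE EE VF EF : Type*} {gE : GraphData VE EE} {gF : GraphData VF EF}
  {G0 : Set VF} {G1 : Set EF} {m0 : G0 → VE} {m1 : G1 → EE}
  {hs : MapsTo gF.s G1 G0} {hr : MapsTo gF.r G1 G0}
  {hF1s : ∀ e : G1, gE.s (m1 e) = m0 ⟨gF.s e, hs e.2⟩}
  {hF1r : ∀ e : G1, gE.r (m1 e) = m0 ⟨gF.r e, hr e.2⟩}

local notation "gZ" => adjGraph gE gF m0 m1 hs hr hF1s hF1r
local notation "gG" => gF.restrict G0 G1 hs hr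

@[simp] theorem adjGraph_s_adjInc (x : EE) : (gZ).s (adjInc m1 x) = adjInc m0 (gE.s x) := rfl

@[simp] theorem adjGraph_s_adjP (e : EF) : (gZ).s (adjP m1 e) = adjP m0 (gF.s e) := rfl

theorem adjGraph_existsUnique_adjP (hGr : gF.r ⁻¹' G0 ⊆ G1)
    (hF2 : ∀ (x : EE) (v : G0), gE.r x = m0 v → ∃! e : G1, m1 e = x ∧ (gG).r e = v)
    (ξ : AdjSpace m1) (v : VF) (hξ : (gZ).r ξ = adjP m0 v) :
    ∃! e : EF, adjP m1 e = ξ ∧ gF.r e = v := by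
  by_cases hv : v ∈ G0
  · rw [adjP_eq_adjInc m0 hv] at hξ
    rcases exists_eq_adjInc_or_adjP m1 ξ with ⟨x, rfl⟩ | ⟨e, he, rfl⟩
    · obtain ⟨e, ⟨rfl, hev⟩, huniq⟩ := hF2 x ⟨v, hv⟩ (adjInc_injective m0 hξ)
      refine ⟨e, ⟨adjP_eq_adjInc m1 e.2, congrArg Subtype.val hev⟩, fun e' ⟨he', he'v⟩ => ?_⟩
      obtain ⟨he'G, he'x⟩ := (adjInc_eq_adjP_iff m1).1 he'.symm
      exact congrArg Subtype.val (huniq ⟨e', he'G⟩ ⟨he'x, Subtype.ext he'v⟩)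
    · exact absurd (hGr ((adjInc_eq_adjP_iff m0).1 hξ.symm).1) he
  · rcases exists_eq_adjInc_or_adjP m1 ξ with ⟨x, rfl⟩ | ⟨e, he, rfl⟩
    · exact absurd ((adjInc_eq_adjP_iff m0).1 hξ).1 hv
    · exact ⟨e, ⟨rfl, (adjP_eq_adjP_iff_of_notMem m0 hv).1 hξ⟩,
        fun e' ⟨he', _⟩ => (adjP_eq_adjP_iff_of_notMem m1 he).1 he'⟩

variable [TopologicalSpace VE] [TopologicalSpace EE] [TopologicalSpace VF] [TopologicalSpace EF]

theorem isClosed_adjGraph_s_image [T2Space VE] [T2Space VF] (hEs : Continuous gE.s)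
    (hFs : Continuous gF.s) (hG0 : IsClosed G0) (hG1 : IsClosed G1) (hm0 : IsProperMap m0)
    (hm1 : IsProperMap m1) {K : Set (AdjSpace m1)} (hK : IsCompact K) : IsClosed ((gZ).s '' K) := by
  have hcomm : (gZ).s ∘ adjQuot m1 = adjQuot m0 ∘ Sum.map gE.s gF.s := by
    funext c
    rcases c with x | e <;> rfl
  rw [← image_preimage_eq K (adjQuot_surjective m1), ← image_comp, hcomm, image_comp]
  exact isClosedMap_adjQuot hG0 hm0 _
    (((isProperMap_adjQuot hG1 hm1).isCompact_preimage hK).image (hEs.sumMap hFs)).isClosed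

theorem adjInc_image_sinkSet_subset_singSet [T2Space VE] [T2Space VF] (hEs : Continuous gE.s)
    (hFs : Continuous gF.s) (hGF : IsRegularClosedSubgraph gF G0 G1) (hm0 : IsProperMap m0)
    (hm1 : IsProperMap m1)
    (hbound : Subtype.val '' (gG).sinkSet ∩ ((closure gF.sinkSet \ gF.sinkSet) ∩ gF.finSet) = ∅) :
    adjInc m0 '' gE.sinkSet ⊆ (gZ).singSet := by
  rintro _ ⟨w, hw, rfl⟩ hreg
  obtain ⟨ξ, hξ⟩ := GraphData.regSet_subset_range_s
    (fun _ hK => isClosed_adjGraph_s_image hEs hFs hGF.closed0 hGF.closed1 hm0 hm1 hK) hreg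
  rcases exists_eq_adjInc_or_adjP m1 ξ with ⟨x, rfl⟩ | ⟨e, -, rfl⟩
  · exact hw (subset_closure ⟨x, adjInc_injective m0 hξ⟩)
  obtain ⟨hu, hmu⟩ := (adjInc_eq_adjP_iff m0).1 hξ.symm
  have hu_sink : (⟨gF.s e, hu⟩ : G0) ∈ (gG).sinkSet :=
    GraphData.mem_sinkSet_of_map hm0.continuous hF1s (hmu ▸ hw)
  have hu_fin : gF.s e ∈ gF.finSet :=
    GraphData.mem_finSet_of_map (continuous_adjP m0)
      (fun _ hK => (isProperMap_adjP hGF.closed1 hm1).isCompact_preimage hK)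
      (adjGraph_s_adjP (hF1s := hF1s) (hF1r := hF1r)) (hξ.symm ▸ hreg.1 :)
  have hu_reg : gF.s e ∈ gF.regSet := ⟨hu_fin, fun hcl => hbound.subset
    ⟨⟨_, hu_sink, rfl⟩, ⟨hcl, fun h => h (subset_closure ⟨e, rfl⟩)⟩, hu_fin⟩⟩
  obtain ⟨e', he's, he'r⟩ := hGF.negInv _ ⟨hu, hu_reg⟩
  exact hu_sink (subset_closure ⟨⟨e', hGF.r_pre he'r⟩, Subtype.ext he's⟩)

theorem adjInc_image_singSet_subset_singSet [T2Space VE] [T2Space VF] (hEs : Continuous gE.s)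
    (hFs : Continuous gF.s) (hGF : IsRegularClosedSubgraph gF G0 G1) (hm0 : IsProperMap m0)
    (hm1 : IsProperMap m1)
    (hbound : Subtype.val '' (gG).sinkSet ∩ ((closure gF.sinkSet \ gF.sinkSet) ∩ gF.finSet) = ∅) :
    adjInc m0 '' gE.singSet ⊆ (gZ).singSet :=
  GraphData.image_singSet_subset (continuous_adjInc m0)
    (fun _ => GraphData.mem_finSet_of_map (continuous_adjInc m0)
      (fun _ hK => (isClosedEmbedding_adjInc hGF.closed1 hm1).isCompact_preimage hK)
      (adjGraph_s_adjInc (hF1s := hF1s) (hF1r := hF1r)))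
    (adjInc_image_sinkSet_subset_singSet hEs hFs hGF hm0 hm1 hbound)

/-- Outside `G⁰` a sink of `F` stays a sink of `E ∪_m F`; inside `G⁰` it is a sink of `G`, which
(F3) sends to a singular vertex of `E`. -/
theorem adjP_image_sinkSet_subset_singSet [T2Space VE] [T2Space VF] (hEs : Continuous gE.s)
    (hFs : Continuous gF.s) (hGF : IsRegularClosedSubgraph gF G0 G1) (hm0 : IsProperMap m0)
    (hm1 : IsProperMap m1)
    (hbound : Subtype.val '' (gG).sinkSet ∩ ((closure gF.sinkSet \ gF.sinkSet) ∩ gF.finSet) = ∅)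
    (hF3 : m0 '' (gG).singSet ⊆ gE.singSet) :
    adjP m0 '' gF.sinkSet ⊆ (gZ).singSet := by
  rintro _ ⟨u, hu, rfl⟩
  by_cases huG : u ∈ G0
  · have hu_sink : (⟨u, huG⟩ : G0) ∈ (gG).sinkSet :=
      GraphData.mem_sinkSet_of_map continuous_subtype_val (fun _ => rfl) hu
    rw [adjP_eq_adjInc m0 huG]
    exact adjInc_image_singSet_subset_singSet hEs hFs hGF hm0 hm1 hbound
      ⟨_, hF3 ⟨_, GraphData.sinkSet_subset_singSet hu_sink, rfl⟩, rfl⟩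
  refine GraphData.sinkSet_subset_singSet fun hu_cl => ?_
  have hrange : range (gZ).s ⊆ range (adjInc m0) ∪ adjP m0 '' closure (range gF.s) := by
    rintro _ ⟨ξ, rfl⟩
    rcases exists_eq_adjInc_or_adjP m1 ξ with ⟨x, rfl⟩ | ⟨e, -, rfl⟩
    · exact .inl ⟨_, rfl⟩
    · exact .inr ⟨_, subset_closure ⟨e, rfl⟩, rfl⟩
  have hclosed : IsClosed (range (adjInc m0) ∪ adjP m0 '' closure (range gF.s)) :=
    (isClosedEmbedding_adjInc hGF.closed0 hm0).isClosed_range.union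
      ((isProperMap_adjP hGF.closed0 hm0).isClosedMap _ isClosed_closure)
  rcases closure_minimal hrange hclosed hu_cl with ⟨w, hw⟩ | ⟨v, hv, hvu⟩
  · exact huG ((adjInc_eq_adjP_iff m0).1 hw).1
  · exact hu ((adjP_eq_adjP_iff_of_notMem m0 huG).1 hvu ▸ hv)

theorem isRegularClosedSubgraph_range_adjInc [T2Space VE] [T2Space VF] (hE : IsTopGraph gE)
    (hFs : Continuous gF.s) (hGF : IsRegularClosedSubgraph gF G0 G1) (hm0 : IsProperMap m0)
    (hm1 : IsProperMap m1)
    (hbound : Subtype.val '' (gG).sinkSet ∩ ((closure gF.sinkSet \ gF.sinkSet) ∩ gF.finSet) = ∅) :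
    IsRegularClosedSubgraph gZ (range (adjInc m0)) (range (adjInc m1)) := by
  have hsm : MapsTo (gZ).s (range (adjInc m1)) (range (adjInc m0)) := by
    rintro _ ⟨x, rfl⟩
    exact ⟨gE.s x, rfl⟩
  have hrm : MapsTo (gZ).r (range (adjInc m1)) (range (adjInc m0)) := by
    rintro _ ⟨x, rfl⟩
    exact ⟨gE.r x, rfl⟩
  have hinc0 := isClosedEmbedding_adjInc hGF.closed0 hm0
  have hinc1 := isClosedEmbedding_adjInc hGF.closed1 hm1
  refine ⟨⟨hsm, hrm, hinc0.isClosed_range, hinc1.isClosed_range,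
    hE.restrict_range hinc0.isEmbedding hinc1.isEmbedding (fun _ => rfl) (fun _ => rfl) hsm hrm⟩,
    ?_, ?_⟩
  · rintro _ ⟨⟨w, rfl⟩, hreg⟩
    have hw : w ∈ gE.regSet := by_contra fun hw =>
      adjInc_image_singSet_subset_singSet hE.s_cont hFs hGF hm0 hm1 hbound ⟨w, hw, rfl⟩ hreg
    obtain ⟨x, rfl⟩ :=
      GraphData.regSet_subset_range_s (fun _ hK => (hK.image hE.s_cont).isClosed) hw
    exact ⟨adjInc m1 x, rfl, _, rfl⟩
  · rintro ξ ⟨w, hw⟩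
    rcases exists_eq_adjInc_or_adjP m1 ξ with ⟨x, rfl⟩ | ⟨e, he, rfl⟩
    · exact ⟨x, rfl⟩
    · exact absurd (hGF.r_pre ((adjInc_eq_adjP_iff m0).1 hw).1) he

theorem isRegularFactorMap_adjP [T2Space VE] [T2Space VF] (hEs : Continuous gE.s)
    (hFs : Continuous gF.s) (hGF : IsRegularClosedSubgraph gF G0 G1) (hm0 : IsProperMap m0)
    (hm1 : IsProperMap m1)
    (hbound : Subtype.val '' (gG).sinkSet ∩ ((closure gF.sinkSet \ gF.sinkSet) ∩ gF.finSet) = ∅)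
    (hF2 : ∀ (x : EE) (v : G0), gE.r x = m0 v → ∃! e : G1, m1 e = x ∧ (gG).r e = v)
    (hF3 : m0 '' (gG).singSet ⊆ gE.singSet) :
    IsRegularFactorMap gF gZ (adjP m0) (adjP m1) where
  proper0 := (isProperMap_adjP hGF.closed0 hm0).properCont
  proper1 := (isProperMap_adjP hGF.closed1 hm1).properCont
  F1r _ := rfl
  F1s _ := rfl
  F2 := adjGraph_existsUnique_adjP hGF.r_pre hF2
  F3 := GraphData.image_singSet_subset (continuous_adjP m0)
    (fun _ => GraphData.mem_finSet_of_map (continuous_adjP m0)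
      (fun _ hK => (isProperMap_adjP hGF.closed1 hm1).isCompact_preimage hK)
      (adjGraph_s_adjP (hF1s := hF1s) (hF1r := hF1r)))
    (adjP_image_sinkSet_subset_singSet hEs hFs hGF hm0 hm1 hbound hF3)

end AdjGraph

theorem adjGraph_regular_of_boundary_condition_general
    {VE EE VF EF : Type*} [TopologicalSpace VE] [TopologicalSpace EE]
    [TopologicalSpace VF] [TopologicalSpace EF]
    [LocallyCompactSpace VE] [T2Space VE] [LocallyCompactSpace EE] [T2Space EE]
    [T2Space VF]
    (gE : GraphData VE EE) (gF : GraphData VF EF)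
    (hE : IsTopGraph gE) (hF : IsTopGraph gF)
    {G0 : Set VF} {G1 : Set EF}
    (hGF : IsRegularClosedSubgraph gF G0 G1)
    (m0 : G0 → VE) (m1 : G1 → EE)
    (hF1s : ∀ e : G1, gE.s (m1 e) = m0 ⟨gF.s e, hGF.s_maps e.2⟩)
    (hF1r : ∀ e : G1, gE.r (m1 e) = m0 ⟨gF.r e, hGF.r_maps e.2⟩)
    (hm : IsRegularFactorMap (gF.restrict G0 G1 hGF.s_maps hGF.r_maps) gE m0 m1)
    (hbound : (Subtype.val '' (gF.restrict G0 G1 hGF.s_maps hGF.r_maps).sinkSet) ∩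
        ((closure gF.sinkSet \ gF.sinkSet) ∩ gF.finSet) = ∅) :
    IsRegularClosedSubgraph (adjGraph gE gF m0 m1 hGF.s_maps hGF.r_maps hF1s hF1r)
        (Set.range (adjInc m0)) (Set.range (adjInc m1)) ∧
    IsRegularFactorMap gF (adjGraph gE gF m0 m1 hGF.s_maps hGF.r_maps hF1s hF1r)
        (adjP m0) (adjP m1) := by
  have hm0 := hm.proper0.isProperMap
  have hm1 := hm.proper1.isProperMap
  exact ⟨isRegularClosedSubgraph_range_adjInc hE hF.s_cont hGF hm0 hm1 hbound,
    isRegularFactorMap_adjP hE.s_cont hF.s_cont hGF hm0 hm1 hbound hm.F2 hm.F3⟩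

/-- Let `E ∪_m F` be an adjunction topological graph such that `G` is a regular closed
subgraph of `F` and `m : G → E` is a regular factor map. If
`G⁰_sink ∩ (closure(F⁰_sink) \ F⁰_sink) ∩ F⁰_fin = ∅`, then `E` is a regular closed
subgraph of `E ∪_m F` and the canonical pair `p : F → E ∪_m F` is a regular factor map. -/
theorem adjGraph_regular_of_boundary_condition
    {VE EE VF EF : Type*} [TopologicalSpace VE] [TopologicalSpace EE]
    [TopologicalSpace VF] [TopologicalSpace EF]
    [LocallyCompactSpace VE] [T2Space VE] [LocallyCompactSpace EE] [T2Space EE]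
    [LocallyCompactSpace VF] [T2Space VF] [LocallyCompactSpace EF] [T2Space EF]
    (gE : GraphData VE EE) (gF : GraphData VF EF)
    (hE : IsTopGraph gE) (hF : IsTopGraph gF)
    {G0 : Set VF} {G1 : Set EF}
    (hGF : IsRegularClosedSubgraph gF G0 G1)
    (m0 : G0 → VE) (m1 : G1 → EE)
    (hF1s : ∀ e : G1, gE.s (m1 e) = m0 ⟨gF.s e, hGF.s_maps e.2⟩)
    (hF1r : ∀ e : G1, gE.r (m1 e) = m0 ⟨gF.r e, hGF.r_maps e.2⟩)
    (hm : IsRegularFactorMap (gF.restrict G0 G1 hGF.s_maps hGF.r_maps) gE m0 m1)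
    (hbound : (Subtype.val '' (gF.restrict G0 G1 hGF.s_maps hGF.r_maps).sinkSet) ∩
        ((closure gF.sinkSet \ gF.sinkSet) ∩ gF.finSet) = ∅) :
    IsRegularClosedSubgraph (adjGraph gE gF m0 m1 hGF.s_maps hGF.r_maps hF1s hF1r)
        (Set.range (adjInc m0)) (Set.range (adjInc m1)) ∧
    IsRegularFactorMap gF (adjGraph gE gF m0 m1 hGF.s_maps hGF.r_maps hF1s hF1r)
        (adjP m0) (adjP m1) :=
  adjGraph_regular_of_boundary_condition_general gE gF hE hF hGF m0 m1 hF1s hF1r hm hbound
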